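/- Let F be a field with char F ∉ {2,3} and let A be the Matsuo algebra of the affine plane of order 3 over F. Then the element (1/3) Σ_{u∈P} p_u is a two-sided multiplicative identity of A. -/

import Mathlib

/-! Summing the products `p_u p_v` over all `u` gives
`p_v + (1/4)(8 p_v + Σ_{u ≠ v} p_u − Σ_{u ≠ v} p_{−u−v}) = 3 p_v`, because `u ↦ −u − v` permutes
`P \ {v}` (as `3v = 0`). Hence `(Σ_u p_u) x = 3x` for every `x`, and the multiplication is
commutative. -/

open Finset

/-- The Matsuo algebra `M_{1/2}(P3)` of the affine plane of order 3 over `F`: the free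
`F`-module on the point set `P = (ℤ/3)²`, with the commutative bilinear multiplication
determined by `p_u p_u = p_u` and `p_u p_v = (1/4)(p_u + p_v − p_{−u−v})` for `u ≠ v`. -/
noncomputable def mMul (F : Type*) [Field F] (x y : ZMod 3 × ZMod 3 → F) :
    ZMod 3 × ZMod 3 → F :=
  ∑ u : ZMod 3 × ZMod 3, ∑ v : ZMod 3 × ZMod 3,
    (x u * y v) •
      (if u = v then Pi.single u (1 : F)
       else (4⁻¹ : F) • (Pi.single u (1 : F) + Pi.single v (1 : F) -
         Pi.single (-u - v) (1 : F)) : ZMod 3 × ZMod 3 → F)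

/-- The sum `Σ_{u ∈ s} p_u` in the Matsuo algebra. -/
noncomputable def pSum (F : Type*) [Field F] (s : Finset (ZMod 3 × ZMod 3)) :
    ZMod 3 × ZMod 3 → F :=
  ∑ u ∈ s, Pi.single u 1

/-- The line of the affine plane of order 3 through `a` with direction `w`
(a coset of the 1-dimensional subspace spanned by `w`). -/
def lineThru (a w : ZMod 3 × ZMod 3) : Finset (ZMod 3 × ZMod 3) :=
  Finset.image (fun t : ZMod 3 => a + t • w) Finset.univ

local notation "P3" => ZMod 3 × ZMod 3

noncomputable def basisMul (F : Type*) [Field F] (u v : P3) : P3 → F :=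
  if u = v then Pi.single u 1
  else (4⁻¹ : F) • (Pi.single u 1 + Pi.single v 1 - Pi.single (-u - v) 1)

lemma mMul_eq_sum_basisMul (F : Type*) [Field F] (x y : P3 → F) :
    mMul F x y = ∑ u, ∑ v, (x u * y v) • basisMul F u v :=
  rfl

lemma basisMul_comm (F : Type*) [Field F] (u v : P3) : basisMul F u v = basisMul F v u := by
  by_cases huv : u = v
  · rw [huv]
  · rw [basisMul, basisMul, if_neg huv, if_neg (Ne.symm huv), add_comm (Pi.single u 1),
      show -u - v = -v - u by abel]

lemma mMul_comm (F : Type*) [Field F] (x y : P3 → F) : mMul F x y = mMul F y x := by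
  rw [mMul_eq_sum_basisMul, mMul_eq_sum_basisMul, sum_comm]
  exact sum_congr rfl fun v _ => sum_congr rfl fun u _ => by rw [mul_comm, basisMul_comm]

lemma mMul_smul_left (F : Type*) [Field F] (c : F) (x y : P3 → F) :
    mMul F (c • x) y = c • mMul F x y := by
  simp only [mMul_eq_sum_basisMul, smul_sum, Pi.smul_apply, smul_eq_mul, mul_assoc, mul_smul]

lemma neg_sub_eq_right_iff {u v : P3} : -u - v = v ↔ u = v := by
  have three_nsmul : ∀ w : P3, w + w + w = 0 := by decide
  constructor
  · intro h
    linear_combination -h - three_nsmul v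
  · rintro rfl
    linear_combination -three_nsmul u

lemma eight_mul_inv_four (F : Type*) [Field F] : (8 : F) * 4⁻¹ = 2 := by
  rcases eq_or_ne (2 : F) 0 with h2 | h2
  · rw [show (8 : F) = 2 * 4 by norm_num, h2, zero_mul, zero_mul]
  · have h4 : (4 : F) ≠ 0 := by simpa [show (4 : F) = 2 * 2 by norm_num] using h2
    field_simp
    norm_num

lemma sum_basisMul_left (F : Type*) [Field F] (v : P3) :
    ∑ u, basisMul F u v = (3 : F) • Pi.single v 1 := by
  have reflect : ∑ u ∈ univ.erase v, (Pi.single (-u - v) 1 : P3 → F) =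
      ∑ u ∈ univ.erase v, Pi.single u 1 := by
    refine sum_nbij' (fun u => -u - v) (fun u => -u - v) ?_ ?_ ?_ ?_ fun _ _ => rfl <;>
      simp [neg_sub_eq_right_iff]
  rw [← add_sum_erase _ _ (mem_univ v), basisMul, if_pos rfl,
    sum_congr rfl fun u hu => by rw [basisMul, if_neg (ne_of_mem_erase hu)], ← smul_sum,
    sum_sub_distrib, sum_add_distrib, reflect, add_sub_cancel_left, sum_const,
    card_erase_of_mem (mem_univ v), card_univ, Fintype.card_prod, ZMod.card,
    ← Nat.cast_smul_eq_nsmul F]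
  match_scalars
  linear_combination eight_mul_inv_four F

lemma mMul_pSum_univ_left (F : Type*) [Field F] (x : P3 → F) :
    mMul F (pSum F univ) x = (3 : F) • x := by
  have pSum_univ_apply : ∀ u, pSum F univ u = 1 := fun u => by simp [pSum, Pi.single_apply]
  simp only [mMul_eq_sum_basisMul, pSum_univ_apply, one_mul]
  rw [sum_comm]
  simp only [← smul_sum, sum_basisMul_left, smul_comm (x _) (3 : F)]
  congr 1
  simp only [← Pi.single_smul', smul_eq_mul, mul_one]
  exact univ_sum_single x

theorem stmt_5_general (F : Type*) [Field F] (h3 : (3 : F) ≠ 0) :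
    ∀ x : ZMod 3 × ZMod 3 → F,
      mMul F ((3⁻¹ : F) • pSum F Finset.univ) x = x ∧
      mMul F x ((3⁻¹ : F) • pSum F Finset.univ) = x := by
  intro x
  have left_unit : mMul F ((3⁻¹ : F) • pSum F univ) x = x := by
    rw [mMul_smul_left, mMul_pSum_univ_left, smul_smul, inv_mul_cancel₀ h3, one_smul]
  exact ⟨left_unit, mMul_comm F x _ ▸ left_unit⟩

/-- If `char F ∉ {2,3}`, the element `(1/3) Σ_{u∈P} p_u` is a two-sided
multiplicative identity of the Matsuo algebra of the affine plane of order 3. -/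
theorem stmt_5 (F : Type*) [Field F] (h2 : (2 : F) ≠ 0) (h3 : (3 : F) ≠ 0) :
    ∀ x : ZMod 3 × ZMod 3 → F,
      mMul F ((3⁻¹ : F) • pSum F Finset.univ) x = x ∧
      mMul F x ((3⁻¹ : F) • pSum F Finset.univ) = x :=
  stmt_5_general F h3
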